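/- arXiv:2206.09580 — 2 statements merged into one kernel-verified Lean document; each statement's English description precedes it below -/
import Mathlib

section
/- For every n ≥ 1 the following identities hold in Mat₂(q): (i) Z22·Z11^n = Z11^n·Z22 + (1 − q^{−n})·Z21·Z12·Z11^{n−1}, and (ii) Z11·Z22^n = Z22^n·Z11 + (1 − q^{n})·Z12·Z21·Z22^{n−1}. -/
noncomputable section

open FreeAlgebra MulOpposite

/-- The relations of the Dipper–Donkin quantized matrix algebra of rank 2:
`Z12·Z11 = Z11·Z12`, `Z21·Z11 = q·Z11·Z21`, `Z22·Z21 = Z21·Z22`, `Z22·Z12 = q·Z12·Z22`,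
`Z21·Z12 = q·Z12·Z21`, `Z22·Z11 = Z11·Z22 + (q−1)·Z12·Z21`, where the generators
`Z11, Z12, Z21, Z22` are the images of `0, 1, 2, 3 : Fin 4`. -/
inductive DDrel {K : Type*} [Field K] (q : K) :
    FreeAlgebra K (Fin 4) → FreeAlgebra K (Fin 4) → Prop
  | r1 : DDrel q (ι K (1 : Fin 4) * ι K (0 : Fin 4)) (ι K (0 : Fin 4) * ι K (1 : Fin 4))
  | r2 : DDrel q (ι K (2 : Fin 4) * ι K (0 : Fin 4)) (q • (ι K (0 : Fin 4) * ι K (2 : Fin 4)))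
  | r3 : DDrel q (ι K (3 : Fin 4) * ι K (2 : Fin 4)) (ι K (2 : Fin 4) * ι K (3 : Fin 4))
  | r4 : DDrel q (ι K (3 : Fin 4) * ι K (1 : Fin 4)) (q • (ι K (1 : Fin 4) * ι K (3 : Fin 4)))
  | r5 : DDrel q (ι K (2 : Fin 4) * ι K (1 : Fin 4)) (q • (ι K (1 : Fin 4) * ι K (2 : Fin 4)))
  | r6 : DDrel q (ι K (3 : Fin 4) * ι K (0 : Fin 4))
      (ι K (0 : Fin 4) * ι K (3 : Fin 4) + (q - 1) • (ι K (1 : Fin 4) * ι K (2 : Fin 4)))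

/-- The Dipper–Donkin quantized matrix algebra `Mat₂(q)`: the quotient of the free
`K`-algebra on four generators by the two-sided ideal generated by the relations above. -/
abbrev DDMat2 {K : Type*} [Field K] (q : K) := RingQuot (DDrel q)

variable {K : Type*} [Field K]

/-- The generator `Z11` of `Mat₂(q)`. -/
def Z11 (q : K) : DDMat2 q := RingQuot.mkAlgHom K (DDrel q) (ι K (0 : Fin 4))
/-- The generator `Z12` of `Mat₂(q)`. -/
def Z12 (q : K) : DDMat2 q := RingQuot.mkAlgHom K (DDrel q) (ι K (1 : Fin 4))
/-- The generator `Z21` of `Mat₂(q)`. -/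
def Z21 (q : K) : DDMat2 q := RingQuot.mkAlgHom K (DDrel q) (ι K (2 : Fin 4))
/-- The generator `Z22` of `Mat₂(q)`. -/
def Z22 (q : K) : DDMat2 q := RingQuot.mkAlgHom K (DDrel q) (ι K (3 : Fin 4))


/-!
Both identities come from one fact about an algebra: if `d * a = a * d + c • y` and
`a * y = q • (y * a)`, then moving `d` past `a ^ (n + 1)` one factor at a time gives
`d * a ^ (n + 1) = a ^ (n + 1) * d + c * [n + 1]_q • (y * a ^ n)`, where `[n + 1]_q` is the
geometric sum `1 + q + ⋯ + q ^ n`. In `Mat₂(q)` the defect of `Z22` past `Z11`, and of `Z11` past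
`Z22`, is a multiple of `Z12 * Z21`, which `Z11` and `Z22` commute with up to the factors `q⁻¹`
and `q`; summing the geometric series yields the coefficients `1 - q⁻ⁿ` and `1 - qⁿ`.
-/

open Finset

theorem mul_pow_succ_eq_pow_succ_mul_add_geom_sum {R A : Type*} [CommSemiring R] [Semiring A]
    [Algebra R A] {a d y : A} {c q : R} (h : d * a = a * d + c • y) (hy : a * y = q • (y * a))
    (n : ℕ) :
    d * a ^ (n + 1) = a ^ (n + 1) * d + (c * ∑ i ∈ range (n + 1), q ^ i) • (y * a ^ n) := by
  induction n with
  | zero => simpa using h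
  | succ n ih =>
    calc d * a ^ (n + 2) = a * (d * a ^ (n + 1)) + c • (y * a ^ (n + 1)) := by
          rw [pow_succ' a (n + 1), ← mul_assoc, h, add_mul, mul_assoc, smul_mul_assoc]
      _ = a ^ (n + 2) * d + (c * (q * ∑ i ∈ range (n + 1), q ^ i + 1)) • (y * a ^ (n + 1)) := by
          rw [ih, mul_add, ← mul_assoc, ← pow_succ', mul_smul_comm, ← mul_assoc, hy,
            smul_mul_assoc, mul_assoc, ← pow_succ', smul_smul, add_assoc, ← add_smul]
          ring_nf
      _ = _ := by rw [← geom_sum_succ]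

section Relations

variable (q : K)

theorem Z12_mul_Z11 : Z12 q * Z11 q = Z11 q * Z12 q := by
  simpa [Z11, Z12] using RingQuot.mkAlgHom_rel K (DDrel.r1 (q := q))

theorem Z21_mul_Z11 : Z21 q * Z11 q = q • (Z11 q * Z21 q) := by
  simpa [Z11, Z21] using RingQuot.mkAlgHom_rel K (DDrel.r2 (q := q))

theorem Z22_mul_Z21 : Z22 q * Z21 q = Z21 q * Z22 q := by
  simpa [Z21, Z22] using RingQuot.mkAlgHom_rel K (DDrel.r3 (q := q))

theorem Z22_mul_Z12 : Z22 q * Z12 q = q • (Z12 q * Z22 q) := by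
  simpa [Z12, Z22] using RingQuot.mkAlgHom_rel K (DDrel.r4 (q := q))

theorem Z21_mul_Z12 : Z21 q * Z12 q = q • (Z12 q * Z21 q) := by
  simpa [Z12, Z21] using RingQuot.mkAlgHom_rel K (DDrel.r5 (q := q))

theorem Z22_mul_Z11 : Z22 q * Z11 q = Z11 q * Z22 q + (q - 1) • (Z12 q * Z21 q) := by
  simpa [Z11, Z12, Z21, Z22] using RingQuot.mkAlgHom_rel K (DDrel.r6 (q := q))

theorem Z11_mul_Z22 : Z11 q * Z22 q = Z22 q * Z11 q + (1 - q) • (Z12 q * Z21 q) := by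
  rw [Z22_mul_Z11]
  module

theorem Z12_mul_Z21_mul_Z11 : Z12 q * Z21 q * Z11 q = q • (Z11 q * (Z12 q * Z21 q)) := by
  rw [mul_assoc, Z21_mul_Z11, mul_smul_comm, ← mul_assoc, Z12_mul_Z11, mul_assoc]

theorem Z11_mul_Z12_mul_Z21 (hq : q ≠ 0) :
    Z11 q * (Z12 q * Z21 q) = q⁻¹ • (Z12 q * Z21 q * Z11 q) := by
  rw [Z12_mul_Z21_mul_Z11, smul_smul, inv_mul_cancel₀ hq, one_smul]

theorem Z22_mul_Z12_mul_Z21 : Z22 q * (Z12 q * Z21 q) = q • (Z12 q * Z21 q * Z22 q) := by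
  rw [← mul_assoc, Z22_mul_Z12, smul_mul_assoc, mul_assoc, Z22_mul_Z21, mul_assoc]

end Relations

/-- For every `n ≥ 1` the following identities hold in `Mat₂(q)`:
(i) `Z22·Z11^n = Z11^n·Z22 + (1 − q^{−n})·Z21·Z12·Z11^{n−1}`, and
(ii) `Z11·Z22^n = Z22^n·Z11 + (1 − q^{n})·Z12·Z21·Z22^{n−1}`. -/
theorem DDMat2_commutation_identities (q : K) (hq : q ≠ 0) (n : ℕ) (hn : 1 ≤ n) :
    Z22 q * Z11 q ^ n =
      Z11 q ^ n * Z22 q + (1 - q⁻¹ ^ n) • (Z21 q * Z12 q * Z11 q ^ (n - 1)) ∧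
    Z11 q * Z22 q ^ n =
      Z22 q ^ n * Z11 q + (1 - q ^ n) • (Z12 q * Z21 q * Z22 q ^ (n - 1)) := by
  obtain ⟨m, rfl⟩ := Nat.exists_eq_add_of_le' hn
  rw [Nat.add_sub_cancel]
  constructor
  · rw [mul_pow_succ_eq_pow_succ_mul_add_geom_sum (Z22_mul_Z11 q) (Z11_mul_Z12_mul_Z21 q hq),
      mul_assoc (Z21 q), ← mul_assoc, Z21_mul_Z12, smul_mul_assoc, smul_smul]
    have hgeom := mul_neg_geom_sum q⁻¹ (m + 1)
    have hinv := mul_inv_cancel₀ hq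
    congr 2
    linear_combination q * hgeom + (∑ i ∈ range (m + 1), q⁻¹ ^ i) * hinv
  · rw [mul_pow_succ_eq_pow_succ_mul_add_geom_sum (Z11_mul_Z22 q) (Z22_mul_Z12_mul_Z21 q),
      mul_neg_geom_sum]
end
end

section
/- Let q be a primitive m-th root of unity in K and λ₁, λ₂ ∈ K nonzero. Then the quotient Q_{1,m} = M(λ)/M_{1,m} of the Verma module is a simple right Mat₂(q)-module of K-dimension m². -/
/-!
`Z12` acts diagonally on the basis `f(a,b)` with eigenvalue `q^(a+b)·λ₁`, so a `Z12`-invariant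
subspace contains the eigencomponents of each of its vectors. Let `W ⊋ M_{1,m}` be invariant and
`w ∈ W \ M_{1,m}`. Dropping the part of `w` in `M_{1,m}` and keeping one eigencomponent gives
`u ∈ W` supported on `b < m`, whose support points have pairwise distinct `b`, as `q^a` determines
`a < m`. If `k` is the largest such `b`, then `u·Z11^k` is a nonzero multiple of some `f(a,0)`:
lower terms die, and the factors `q^b - 1` of the top term do not vanish for `0 < b < m`. From
`f(a,0)` the operators `Z21` and `Z22` reach every `f(a',b')`, so `W` is everything. The
dimension count is that of the complementary span of the `f(a,b)` with `b < m`.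
-/

noncomputable section

open FreeAlgebra MulOpposite

variable {K : Type*} [Field K]

/-- The underlying space of the Verma module `M(λ)`: the `K`-vector space with basis
`f(a,b)`, `a : Fin m`, `b : ℕ`, realized as finitely supported functions. -/
abbrev VermaSpace (K : Type*) [Field K] (m : ℕ) := ((Fin m × ℕ) →₀ K)

variable (q la lb : K) (m : ℕ) [NeZero m]

/-- The action of `Z11` on the Verma module `M(λ)`:
`f(a,b)·Z11 = 0` if `b = 0` and `λ₁·q^a·(q^b − 1)·f(a+1,b−1)` if `b ≥ 1`, where `f(m,c)`
is interpreted as `λ₂·f(0,c)` (addition in `Fin m` is cyclic). -/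
noncomputable def VF11 : VermaSpace K m →ₗ[K] VermaSpace K m :=
  Finsupp.linearCombination K fun p : Fin m × ℕ =>
    if p.2 = 0 then 0 else
      ((if (p.1 : ℕ) = m - 1 then lb else 1) * la * q ^ (p.1 : ℕ) * (q ^ p.2 - 1)) •
        Finsupp.single (p.1 + 1, p.2 - 1) (1 : K)

/-- The action of `Z12` on the Verma module: `f(a,b)·Z12 = q^{a+b}·λ₁·f(a,b)`. -/
noncomputable def VF12 : VermaSpace K m →ₗ[K] VermaSpace K m :=
  Finsupp.linearCombination K fun p : Fin m × ℕ =>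
    (q ^ ((p.1 : ℕ) + p.2) * la) • Finsupp.single p (1 : K)

/-- The action of `Z21` on the Verma module:
`f(a,b)·Z21 = f(a+1,b)` if `a ≤ m−2` and `λ₂·f(0,b)` if `a = m−1`. -/
noncomputable def VF21 : VermaSpace K m →ₗ[K] VermaSpace K m :=
  Finsupp.linearCombination K fun p : Fin m × ℕ =>
    (if (p.1 : ℕ) = m - 1 then lb else 1) • Finsupp.single (p.1 + 1, p.2) (1 : K)

/-- The action of `Z22` on the Verma module: `f(a,b)·Z22 = f(a,b+1)`. -/
noncomputable def VF22 : VermaSpace K m →ₗ[K] VermaSpace K m :=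
  Finsupp.linearCombination K fun p : Fin m × ℕ =>
    Finsupp.single (p.1, p.2 + 1) (1 : K)

/-- The subspace `M_{p,m}` of the Verma module, spanned by the basis vectors `f(a,b)`
with `b ≥ p·m`. -/
def Mpm (p : ℕ) : Submodule K (VermaSpace K m) :=
  Submodule.span K
    {v : VermaSpace K m | ∃ (a : Fin m) (b : ℕ), p * m ≤ b ∧ v = Finsupp.single (a, b) (1 : K)}

open Fin.NatCast

theorem Submodule.mem_of_sum_mem_of_eigenvectors {ι V : Type*} [AddCommGroup V] [Module K V]
    {f : Module.End K V} {W : Submodule K V} (hW : ∀ x ∈ W, f x ∈ W) {μ : ι → K}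
    {v : ι → V} (hv : ∀ i, f (v i) = μ i • v i) {s : Finset ι} (hμ : Set.InjOn μ s)
    (hs : ∑ i ∈ s, v i ∈ W) : ∀ i ∈ s, v i ∈ W := by
  classical
  induction s using Finset.induction_on generalizing v with
  | empty => simp
  | insert j s hj ih =>
    rw [Finset.sum_insert hj] at hs
    -- `f - μ j` kills `v j` and rescales the other eigenvectors by nonzero factors.
    have hshift : ∑ i ∈ s, (μ i - μ j) • v i ∈ W := by
      have h : f (v j + ∑ i ∈ s, v i) - μ j • (v j + ∑ i ∈ s, v i) =
          ∑ i ∈ s, (μ i - μ j) • v i := by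
        simp only [map_add, map_sum, hv, smul_add, Finset.smul_sum, sub_smul,
          Finset.sum_sub_distrib]
        abel
      exact h ▸ W.sub_mem (hW _ hs) (W.smul_mem _ hs)
    have hrest : ∀ i ∈ s, v i ∈ W := by
      intro i hi
      have hμij : μ i - μ j ≠ 0 := sub_ne_zero.2 fun h =>
        hj (hμ (Finset.mem_insert_of_mem hi) (Finset.mem_insert_self j s) h ▸ hi)
      refine (W.smul_mem_iff hμij).1 (ih (v := fun i => (μ i - μ j) • v i) ?_ ?_ hshift i hi)
      · intro i
        rw [map_smul, hv, smul_comm]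
      · exact hμ.mono (Finset.coe_subset.2 (Finset.subset_insert j s))
    intro i hi
    rcases Finset.mem_insert.1 hi with rfl | hi
    · simpa using W.sub_mem hs (W.sum_mem hrest)
    · exact hrest i hi

open Classical in
theorem Finsupp.filter_mem_of_apply_eq_mul {α : Type*} {f : Module.End K (α →₀ K)}
    {W : Submodule K (α →₀ K)} (hW : ∀ x ∈ W, f x ∈ W) {μ : α → K}
    (hf : ∀ v x, f v x = μ x * v x) {w : α →₀ K} (hw : w ∈ W) (ν : K) :
    w.filter (fun x => μ x = ν) ∈ W := by
  have hv : ∀ ν, f (w.filter (fun x => μ x = ν)) = ν • w.filter (fun x => μ x = ν) := by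
    intro ν
    ext x
    by_cases h : μ x = ν <;> simp [hf, h]
  have hsum : ∑ ν ∈ w.support.image μ, w.filter (fun x => μ x = ν) = w := by
    ext x
    by_cases hx : x ∈ w.support
    · simp [Finsupp.finsetSum_apply, Finsupp.filter_apply, Finset.mem_image_of_mem μ hx]
    · simp_all [Finsupp.finsetSum_apply, Finsupp.filter_apply]
  by_cases hν : ν ∈ w.support.image μ
  · exact Submodule.mem_of_sum_mem_of_eigenvectors hW hv (Set.injOn_id _)
      (by rwa [hsum]) ν hν
  · rw [(Finsupp.filter_eq_zero_iff _ _).2 fun x hx => ?_]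
    · exact W.zero_mem
    · by_contra h
      exact hν (Finset.mem_image.2 ⟨x, Finsupp.mem_support_iff.2 h, hx⟩)

theorem Finsupp.isCompl_supported_compl {α : Type*} (s : Set α) :
    IsCompl (Finsupp.supported K K s) (Finsupp.supported K K sᶜ) :=
  ⟨Finsupp.disjoint_supported_supported disjoint_compl_right, by
    rw [codisjoint_iff, ← Finsupp.supported_union, Set.union_compl_self,
      Finsupp.supported_univ]⟩

theorem Finsupp.eq_top_of_forall_single_mem {α : Type*} {W : Submodule K (α →₀ K)}
    (h : ∀ x, Finsupp.single x 1 ∈ W) : W = ⊤ := by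
  refine top_unique (Finsupp.basisSingleOne.span_eq.symm.le.trans (Submodule.span_le.2 ?_))
  rw [Finsupp.coe_basisSingleOne]
  exact Set.range_subset_iff.2 h

theorem Mpm_eq_supported (n p : ℕ) :
    Mpm (K := K) n p = Finsupp.supported K K {x : Fin n × ℕ | p * n ≤ x.2} := by
  rw [Finsupp.supported_eq_span_single, Mpm]
  congr 1
  ext v
  constructor
  · rintro ⟨a, b, hb, rfl⟩
    exact ⟨(a, b), hb, rfl⟩
  · rintro ⟨⟨a, b⟩, hb, rfl⟩
    exact ⟨a, b, hb, rfl⟩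

theorem single_mem_Mpm_iff (n p : ℕ) (a : Fin n) (b : ℕ) :
    Finsupp.single (a, b) (1 : K) ∈ Mpm n p ↔ p * n ≤ b := by
  rw [Mpm_eq_supported]
  refine ⟨fun h => ?_, fun h => Finsupp.single_mem_supported K 1 h⟩
  by_contra hb
  simpa using (Finsupp.mem_supported' K _).1 h (a, b) hb

theorem finrank_quotient_Mpm (n p : ℕ) :
    Module.finrank K (VermaSpace K n ⧸ Mpm (K := K) n p) = n * (p * n) := by
  let e : ↥{x : Fin n × ℕ | p * n ≤ x.2}ᶜ ≃ Fin n × Fin (p * n) :=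
    { toFun := fun x => (x.1.1, ⟨x.1.2, not_le.1 x.2⟩)
      invFun := fun y => ⟨(y.1, y.2), not_le.2 y.2.isLt⟩
      left_inv := fun _ => rfl
      right_inv := fun _ => rfl }
  rw [Mpm_eq_supported,
    (Submodule.quotientEquivOfIsCompl _ _ (Finsupp.isCompl_supported_compl _)).finrank_eq,
    (Finsupp.supportedEquivFinsupp _).finrank_eq, (Finsupp.domLCongr e).finrank_eq,
    Module.finrank_finsupp_self, Fintype.card_prod, Fintype.card_fin, Fintype.card_fin]

theorem VF12_apply (n : ℕ) (v : VermaSpace K n) (x : Fin n × ℕ) :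
    VF12 q la n v x = q ^ ((x.1 : ℕ) + x.2) * la * v x := by
  induction v using Finsupp.induction_linear with
  | zero => simp
  | add v w hv hw => simp [hv, hw, mul_add]
  | single y c =>
    rw [VF12, Finsupp.linearCombination_single, Finsupp.smul_single, Finsupp.smul_single]
    by_cases h : y = x
    · subst h; simp [mul_comm]
    · simp [h]

theorem VF22_single (n : ℕ) (a : Fin n) (b : ℕ) :
    VF22 n (Finsupp.single (a, b) (1 : K)) = Finsupp.single (a, b + 1) 1 := by
  rw [VF22, Finsupp.linearCombination_single, one_smul]

theorem VF21_single (a : Fin m) (b : ℕ) :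
    VF21 lb m (Finsupp.single (a, b) 1) =
      (if (a : ℕ) = m - 1 then lb else 1) • Finsupp.single (a + 1, b) 1 := by
  rw [VF21, Finsupp.linearCombination_single, one_smul]

theorem VF11_single_zero (a : Fin m) :
    VF11 q la lb m (Finsupp.single (a, 0) 1) = 0 := by
  rw [VF11, Finsupp.linearCombination_single, one_smul, if_pos rfl]

theorem VF11_single_succ (a : Fin m) (b : ℕ) :
    VF11 q la lb m (Finsupp.single (a, b + 1) 1) =
      ((if (a : ℕ) = m - 1 then lb else 1) * la * q ^ (a : ℕ) * (q ^ (b + 1) - 1)) •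
        Finsupp.single (a + 1, b) 1 := by
  rw [VF11, Finsupp.linearCombination_single, one_smul, if_neg b.succ_ne_zero]
  rfl

theorem VF11_pow_single_of_lt {a : Fin m} {b j : ℕ} (h : b < j) :
    (VF11 q la lb m ^ j) (Finsupp.single (a, b) 1) = 0 := by
  induction j generalizing a b with
  | zero => exact absurd h b.not_lt_zero
  | succ j ih =>
    rw [pow_succ, Module.End.mul_apply]
    rcases b with _ | b
    · rw [VF11_single_zero, map_zero]
    · rw [VF11_single_succ, map_smul, ih (Nat.succ_lt_succ_iff.1 h), smul_zero]

theorem VF11_pow_single (hq : IsPrimitiveRoot q m) (hla : la ≠ 0) (hlb : lb ≠ 0)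
    {a : Fin m} {b j : ℕ} (hj : j ≤ b) (hb : b < m) :
    ∃ C : K, C ≠ 0 ∧ (VF11 q la lb m ^ j) (Finsupp.single (a, b) (1 : K)) =
      C • Finsupp.single (a + (j : Fin m), b - j) (1 : K) := by
  induction j generalizing a b with
  | zero => exact ⟨1, one_ne_zero, by simp⟩
  | succ j ih =>
    obtain ⟨b, rfl⟩ : ∃ b', b = b' + 1 := ⟨b - 1, by omega⟩
    obtain ⟨C, hC, hCeq⟩ := ih (a := a + 1) (b := b) (by omega) (by omega)
    have hcoeff :
        (if (a : ℕ) = m - 1 then lb else 1) * la * q ^ (a : ℕ) * (q ^ (b + 1) - 1) ≠ 0 := by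
      refine mul_ne_zero (mul_ne_zero (mul_ne_zero (by split_ifs <;> simp [hlb]) hla)
        (pow_ne_zero _ (hq.ne_zero (NeZero.ne m)))) (sub_ne_zero.2 ?_)
      exact hq.pow_ne_one_of_pos_of_lt b.succ_ne_zero hb
    refine ⟨_ * C, mul_ne_zero hcoeff hC, ?_⟩
    rw [pow_succ, Module.End.mul_apply, VF11_single_succ, map_smul, hCeq, smul_smul]
    congr 3
    · push_cast; rw [add_assoc, add_comm (1 : Fin m)]
    · omega

theorem exists_single_zero_mem_of_injOn (hq : IsPrimitiveRoot q m) (hla : la ≠ 0)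
    (hlb : lb ≠ 0) {W : Submodule K (VermaSpace K m)} (hW : ∀ v ∈ W, VF11 q la lb m v ∈ W)
    {u : VermaSpace K m} (hu : u ∈ W) (hu0 : u ≠ 0) (hlt : ∀ x ∈ u.support, x.2 < m)
    (hinj : Set.InjOn Prod.snd (u.support : Set (Fin m × ℕ))) :
    ∃ a : Fin m, Finsupp.single (a, 0) (1 : K) ∈ W := by
  obtain ⟨x, hx, hmax⟩ :=
    u.support.exists_max_image Prod.snd (Finsupp.support_nonempty_iff.2 hu0)
  obtain ⟨C, hC, hCx⟩ := VF11_pow_single q la lb m hq hla hlb (a := x.1) le_rfl (hlt x hx)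
  have hkill :
      ∀ y ∈ u.support, y ≠ x → (VF11 q la lb m ^ x.2) (Finsupp.single y (u y)) = 0 := by
    intro y hy hyx
    have hlt : y.2 < x.2 := lt_of_le_of_ne (hmax y hy) fun h => hyx (hinj hy hx h)
    rw [← Finsupp.smul_single_one, map_smul, VF11_pow_single_of_lt q la lb m hlt, smul_zero]
  have hlower :
      (VF11 q la lb m ^ x.2) u = (u x * C) • Finsupp.single (x.1 + (x.2 : Fin m), 0) 1 := by
    conv_lhs => rw [← u.sum_single]
    rw [map_finsuppSum, Finsupp.sum, Finset.sum_eq_single x hkill (absurd hx),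
      ← Finsupp.smul_single_one, map_smul, hCx, Nat.sub_self, smul_smul]
  have hux : u x * C ≠ 0 := mul_ne_zero (Finsupp.mem_support_iff.1 hx) hC
  have hW' := Module.End.pow_apply_mem_of_forall_mem x.2 hW u hu
  exact ⟨_, (W.smul_mem_iff hux).1 (hlower ▸ hW')⟩

theorem exists_single_zero_mem (hq : IsPrimitiveRoot q m) (hla : la ≠ 0) (hlb : lb ≠ 0)
    {W : Submodule K (VermaSpace K m)} (hW11 : ∀ v ∈ W, VF11 q la lb m v ∈ W)
    (hW12 : ∀ v ∈ W, VF12 q la m v ∈ W) (hMW : Mpm m 1 ≤ W) {w : VermaSpace K m}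
    (hw : w ∈ W) (hwM : w ∉ Mpm m 1) :
    ∃ a : Fin m, Finsupp.single (a, 0) (1 : K) ∈ W := by
  classical
  rw [Mpm_eq_supported, Finsupp.mem_supported, Set.not_subset] at hwM
  obtain ⟨x, hx, hxm⟩ := hwM
  replace hxm : x.2 < m := by simpa using hxm
  set w' := w.filter fun y => y.2 < m
  have hw' : w' ∈ W := by
    have hhigh : w.filter (fun y => ¬ y.2 < m) ∈ W := hMW <| by
      rw [Mpm_eq_supported, Finsupp.mem_supported']
      intro y hy
      simp_all
    have hsplit : w' = w - w.filter (fun y => ¬ y.2 < m) :=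
      eq_sub_iff_add_eq.2 (w.filter_add_filter_not _)
    exact hsplit ▸ W.sub_mem hw hhigh
  set μ : Fin m × ℕ → K := fun y => q ^ ((y.1 : ℕ) + y.2) * la
  set u := w'.filter fun y => μ y = μ x
  have hu : u ∈ W := Finsupp.filter_mem_of_apply_eq_mul hW12 (VF12_apply q la m) hw' _
  have hsupp : ∀ y ∈ u.support, y.2 < m ∧ μ y = μ x := by
    intro y hy
    simp only [u, w', Finsupp.support_filter, Finset.mem_filter] at hy
    exact ⟨hy.1.2, hy.2⟩
  refine exists_single_zero_mem_of_injOn q la lb m hq hla hlb hW11 hu ?_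
    (fun y hy => (hsupp y hy).1) ?_
  · intro hu0
    have hux : u x = w x := by simp [u, w', hxm]
    exact Finsupp.mem_support_iff.1 hx (hux ▸ DFunLike.congr_fun hu0 x)
  · intro y hy z hz hyz
    have h : q ^ (y.1 : ℕ) * q ^ y.2 * la = q ^ (z.1 : ℕ) * q ^ y.2 * la := by
      simpa only [μ, pow_add, hyz] using (hsupp y hy).2.trans (hsupp z hz).2.symm
    have h' := mul_right_cancel₀ (pow_ne_zero _ (hq.ne_zero (NeZero.ne m)))
      (mul_right_cancel₀ hla h)
    exact Prod.ext (Fin.ext (hq.pow_inj y.1.isLt z.1.isLt h')) hyz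

theorem single_mem_of_single_zero_mem (hlb : lb ≠ 0) {W : Submodule K (VermaSpace K m)}
    (hW21 : ∀ v ∈ W, VF21 lb m v ∈ W) (hW22 : ∀ v ∈ W, VF22 m v ∈ W) {a₀ : Fin m}
    (h₀ : Finsupp.single (a₀, 0) (1 : K) ∈ W) (x : Fin m × ℕ) :
    Finsupp.single x (1 : K) ∈ W := by
  have hright : ∀ (a : Fin m) (b : ℕ),
      Finsupp.single (a, b) (1 : K) ∈ W → Finsupp.single (a + 1, b) 1 ∈ W := by
    intro a b h
    have hc : (if (a : ℕ) = m - 1 then lb else 1) ≠ 0 := by split_ifs <;> simp [hlb]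
    exact (W.smul_mem_iff hc).1 (VF21_single lb m a b ▸ hW21 _ h)
  have hup : ∀ (a : Fin m) (b : ℕ),
      Finsupp.single (a, 0) (1 : K) ∈ W → Finsupp.single (a, b) 1 ∈ W := by
    intro a b h
    induction b with
    | zero => exact h
    | succ b ih => exact VF22_single (K := K) m a b ▸ hW22 _ ih
  have hrow : ∀ j : ℕ, Finsupp.single (a₀ + (j : Fin m), 0) (1 : K) ∈ W := by
    intro j
    induction j with
    | zero => simpa using h₀
    | succ j ih => simpa [add_assoc] using hright _ _ ih
  obtain ⟨a, b⟩ := x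
  exact hup a b (by simpa using hrow (a - a₀ : Fin m))

/-- Let `q` be a primitive `m`-th root of unity and `λ₁, λ₂ ∈ K`
nonzero. The quotient `Q_{1,m} = M(λ)/M_{1,m}` of the Verma module is a simple right
`Mat₂(q)`-module of `K`-dimension `m²`: equivalently, `M_{1,m}` is a proper subspace, any
invariant subspace containing `M_{1,m}` is `M_{1,m}` or everything, and the quotient has
dimension `m²`. -/
theorem DDMat2_verma_quotient_Q1_simple
    (hq1 : q ^ m = 1) (hq2 : ∀ k : ℕ, 1 ≤ k → k < m → q ^ k ≠ 1)
    (hla : la ≠ 0) (hlb : lb ≠ 0) :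
    Mpm (K := K) m 1 ≠ ⊤ ∧
    (∀ W : Submodule K (VermaSpace K m),
        (∀ v ∈ W, VF11 q la lb m v ∈ W) → (∀ v ∈ W, VF12 q la m v ∈ W) →
        (∀ v ∈ W, VF21 lb m v ∈ W) → (∀ v ∈ W, VF22 (K := K) m v ∈ W) →
        Mpm (K := K) m 1 ≤ W → W = Mpm (K := K) m 1 ∨ W = ⊤) ∧
    Module.finrank K (VermaSpace K m ⧸ Mpm (K := K) m 1) = m ^ 2 := by
  have hq : IsPrimitiveRoot q m := .mk_of_lt q (NeZero.pos m) hq1 fun l hl => hq2 l hl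
  refine ⟨fun htop => ?_, fun W hW11 hW12 hW21 hW22 hMW => ?_, ?_⟩
  · have h : Finsupp.single (0, 0) (1 : K) ∈ Mpm m 1 := htop ▸ Submodule.mem_top
    rw [single_mem_Mpm_iff, one_mul, Nat.le_zero] at h
    exact NeZero.ne m h
  · by_cases hWM : W ≤ Mpm m 1
    · exact .inl (le_antisymm hWM hMW)
    · obtain ⟨w, hw, hwM⟩ := SetLike.not_le_iff_exists.1 hWM
      obtain ⟨a, ha⟩ := exists_single_zero_mem q la lb m hq hla hlb hW11 hW12 hMW hw hwM
      exact .inr (Finsupp.eq_top_of_forall_single_mem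
        (single_mem_of_single_zero_mem lb m hlb hW21 hW22 ha))
  · rw [finrank_quotient_Mpm, one_mul, sq]
end
end
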